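/- Let 0 ≤ a, b ≤ 1 and let r, s ≥ 0 be reals with r + s = 1, and c ∈ ℂ. Let ρ = !![r, c; conj c, s], and let Û₁ = |0⟩⟨0| ⊗ U₁ + |1⟩⟨1| ⊗ U₂ on index type Fin 2 × Fin 2, with U₁ = !![√a, √(1−a); √(1−a), −√a] and U₂ = !![√(1−b), √b; √b, −√(1−b)]. Define ρ' as the partial trace over the first tensor factor of Û₁ (ρ ⊗ |0⟩⟨0|) Û₁†, i.e. ρ'(j,k) = Σᵢ (Û₁ (ρ ⊗ |0⟩⟨0|) Û₁†)((i,j),(i,k)). Then ρ' = !![r·a + s·(1−b), r·√(a(1−a)) + s·√((1−b)b); r·√(a(1−a)) + s·√((1−b)b), r·(1−a) + s·b]. In particular, the diagonal of ρ' equals A x, where A = !![a, 1−b; 1−a, b] and x = (r, s)ᵀ: ρ'₀₀ = a·r + (1−b)·s and ρ'₁₁ = (1−a)·r + b·s. -/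

import Mathlib

/-!
`Û = ∑ᵢ |i⟩⟨i| ⊗ Uᵢ` is block diagonal, controlled by the system. Conjugating `ρ ⊗ |0⟩⟨0|` by it
and tracing out the system kills the coherences of `ρ`, leaving `ρ' = ∑ᵢ ρᵢᵢ uᵢ uᵢ†` with `uᵢ` the
first column of `Uᵢ`. The first columns of `U₁` and `U₂` are `(√a, √(1 - a))` and `(√(1 - b), √b)`,
which gives the stated matrix; its diagonal is `A x`.
-/

open Matrix Complex
open scoped Kronecker

namespace Matrix

variable {R ι κ : Type*} [Fintype ι]

def traceLeft [AddCommMonoid R] (M : Matrix (ι × κ) (ι × κ) R) : Matrix κ κ R :=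
  of fun j k => ∑ i, M (i, j) (i, k)

theorem traceLeft_sum [AddCommMonoid R] {α : Type*} (s : Finset α)
    (M : α → Matrix (ι × κ) (ι × κ) R) :
    traceLeft (∑ a ∈ s, M a) = ∑ a ∈ s, traceLeft (M a) := by
  ext j k
  simp only [traceLeft, of_apply, sum_apply]
  exact Finset.sum_comm

theorem traceLeft_kronecker [NonUnitalNonAssocSemiring R] (A : Matrix ι ι R) (B : Matrix κ κ R) :
    traceLeft (A ⊗ₖ B) = trace A • B := by
  ext j k
  simp [traceLeft, trace, Finset.sum_mul]

def controlled [Semiring R] [DecidableEq ι] (U : ι → Matrix κ κ R) :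
    Matrix (ι × κ) (ι × κ) R :=
  ∑ i, single i i 1 ⊗ₖ U i

section Controlled

variable [CommSemiring R] [StarRing R] [DecidableEq ι] [Fintype κ]

theorem controlled_mul_kronecker_mul_conjTranspose (U : ι → Matrix κ κ R) (ρ : Matrix ι ι R)
    (P : Matrix κ κ R) :
    controlled U * (ρ ⊗ₖ P) * (controlled U)ᴴ =
      ∑ i, ∑ i', single i i' (ρ i i') ⊗ₖ (U i * P * (U i')ᴴ) := by
  simp only [controlled, conjTranspose_sum, conjTranspose_kronecker, conjTranspose_single,
    star_one, Finset.sum_mul, Finset.mul_sum, ← mul_kronecker_mul, single_mul_mul_single,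
    one_mul, mul_one]
  exact Finset.sum_comm

theorem traceLeft_controlled_conj (U : ι → Matrix κ κ R) (ρ : Matrix ι ι R) (P : Matrix κ κ R) :
    traceLeft (controlled U * (ρ ⊗ₖ P) * (controlled U)ᴴ) = ∑ i, ρ i i • (U i * P * (U i)ᴴ) := by
  rw [controlled_mul_kronecker_mul_conjTranspose]
  simp only [traceLeft_sum, traceLeft_kronecker]
  refine Finset.sum_congr rfl fun i _ => ?_
  rw [Finset.sum_eq_single i
      (fun i' _ hi' => by rw [trace_single_eq_of_ne _ _ _ (Ne.symm hi'), zero_smul]) (by simp),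
    trace_single_eq_same]

end Controlled

theorem mul_single_mul_conjTranspose [Fintype κ] [DecidableEq κ] [Semiring R] [StarRing R]
    {m : Type*} (U V : Matrix m κ R) (k : κ) :
    U * single k k (1 : R) * Vᴴ = vecMulVec (fun j => U j k) (star fun j => V j k) := by
  ext i j
  simp [mul_apply, single, vecMulVec_apply, ite_and]

theorem vecMulVec_ofReal_star (v : κ → ℝ) :
    vecMulVec (fun j => (v j : ℂ)) (star fun j => (v j : ℂ)) = (vecMulVec v v).map ofReal := by
  ext i j
  simp [vecMulVec_apply]

theorem vecMulVec_sqrt_sqrt {p q : ℝ} (hp : 0 ≤ p) (hq : 0 ≤ q) :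
    vecMulVec ![√p, √q] ![√p, √q] = !![p, √(p * q); √(p * q), q] := by
  ext i j
  fin_cases i <;> fin_cases j <;>
    simp [vecMulVec_apply, Real.mul_self_sqrt, Real.sqrt_mul hp, mul_comm, hp, hq]

end Matrix

theorem transition_partial_trace_general (a b : ℝ) (ha0 : 0 ≤ a) (ha1 : a ≤ 1)
    (hb0 : 0 ≤ b) (hb1 : b ≤ 1)
    (r s : ℝ) (c : ℂ)
    (ρ : Matrix (Fin 2) (Fin 2) ℂ)
    (hρ : ρ = !![(r : ℂ), c; (starRingEnd ℂ) c, (s : ℂ)])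
    (U₁ U₂ : Matrix (Fin 2) (Fin 2) ℂ)
    (hU₁ : U₁ = !![(Real.sqrt a : ℂ), (Real.sqrt (1 - a) : ℂ);
                   (Real.sqrt (1 - a) : ℂ), -(Real.sqrt a : ℂ)])
    (hU₂ : U₂ = !![(Real.sqrt (1 - b) : ℂ), (Real.sqrt b : ℂ);
                   (Real.sqrt b : ℂ), -(Real.sqrt (1 - b) : ℂ)])
    (Uhat₁ : Matrix (Fin 2 × Fin 2) (Fin 2 × Fin 2) ℂ)
    (hUhat₁ : Uhat₁ = (Matrix.single (0 : Fin 2) (0 : Fin 2) (1 : ℂ)) ⊗ₖ U₁ +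
                      (Matrix.single (1 : Fin 2) (1 : Fin 2) (1 : ℂ)) ⊗ₖ U₂)
    (ρ' : Matrix (Fin 2) (Fin 2) ℂ)
    (hρ' : ρ' = fun j k => ∑ i : Fin 2,
      (Uhat₁ * (ρ ⊗ₖ Matrix.single (0 : Fin 2) (0 : Fin 2) (1 : ℂ)) * Uhat₁ᴴ)
        (i, j) (i, k)) :
    ρ' = !![((r * a + s * (1 - b) : ℝ) : ℂ),
            ((r * Real.sqrt (a * (1 - a)) + s * Real.sqrt ((1 - b) * b) : ℝ) : ℂ);
            ((r * Real.sqrt (a * (1 - a)) + s * Real.sqrt ((1 - b) * b) : ℝ) : ℂ),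
            ((r * (1 - a) + s * b : ℝ) : ℂ)] ∧
    ρ' 0 0 = ((a * r + (1 - b) * s : ℝ) : ℂ) ∧
    ρ' 1 1 = (((1 - a) * r + b * s : ℝ) : ℂ) := by
  have hUhat : Uhat₁ = controlled ![U₁, U₂] := by
    rw [hUhat₁, controlled, Fin.sum_univ_two]; rfl
  have hcol₁ : (fun j => U₁ j 0) = fun j => ((![√a, √(1 - a)] j : ℝ) : ℂ) := by
    ext j; fin_cases j <;> simp [hU₁]
  have hcol₂ : (fun j => U₂ j 0) = fun j => ((![√(1 - b), √b] j : ℝ) : ℂ) := by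
    ext j; fin_cases j <;> simp [hU₂]
  have hmix : ρ' = (r : ℂ) • (!![a, √(a * (1 - a)); √(a * (1 - a)), 1 - a]).map ofReal +
      (s : ℂ) • (!![1 - b, √((1 - b) * b); √((1 - b) * b), b]).map ofReal := by
    change ρ' = traceLeft (ι := Fin 2) _ at hρ'
    rw [hρ', hUhat, traceLeft_controlled_conj, Fin.sum_univ_two]
    simp only [mul_single_mul_conjTranspose, cons_val_zero, cons_val_one, hcol₁, hcol₂,
      vecMulVec_ofReal_star, vecMulVec_sqrt_sqrt ha0 (sub_nonneg.2 ha1),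
      vecMulVec_sqrt_sqrt (sub_nonneg.2 hb1) hb0, hρ]
    simp
  have hρ'_eq : ρ' = !![((r * a + s * (1 - b) : ℝ) : ℂ),
      ((r * Real.sqrt (a * (1 - a)) + s * Real.sqrt ((1 - b) * b) : ℝ) : ℂ);
      ((r * Real.sqrt (a * (1 - a)) + s * Real.sqrt ((1 - b) * b) : ℝ) : ℂ),
      ((r * (1 - a) + s * b : ℝ) : ℂ)] := by
    rw [hmix]
    ext j k
    fin_cases j <;> fin_cases k <;> simp
  refine ⟨hρ'_eq, ?_, ?_⟩ <;> simp [hρ'_eq, mul_comm]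

/-- Conclusion of Step 2 of Proposition 1: after applying the transition
unitary and tracing out the system particle, the environment state `ρ'` has
diagonal equal to the classically transitioned belief state `A x`. -/
theorem transition_partial_trace (a b : ℝ) (ha0 : 0 ≤ a) (ha1 : a ≤ 1)
    (hb0 : 0 ≤ b) (hb1 : b ≤ 1)
    (r s : ℝ) (hr : 0 ≤ r) (hs : 0 ≤ s) (hrs : r + s = 1) (c : ℂ)
    (ρ : Matrix (Fin 2) (Fin 2) ℂ)
    (hρ : ρ = !![(r : ℂ), c; (starRingEnd ℂ) c, (s : ℂ)])
    (U₁ U₂ : Matrix (Fin 2) (Fin 2) ℂ)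
    (hU₁ : U₁ = !![(Real.sqrt a : ℂ), (Real.sqrt (1 - a) : ℂ);
                   (Real.sqrt (1 - a) : ℂ), -(Real.sqrt a : ℂ)])
    (hU₂ : U₂ = !![(Real.sqrt (1 - b) : ℂ), (Real.sqrt b : ℂ);
                   (Real.sqrt b : ℂ), -(Real.sqrt (1 - b) : ℂ)])
    (Uhat₁ : Matrix (Fin 2 × Fin 2) (Fin 2 × Fin 2) ℂ)
    (hUhat₁ : Uhat₁ = (Matrix.single (0 : Fin 2) (0 : Fin 2) (1 : ℂ)) ⊗ₖ U₁ +
                      (Matrix.single (1 : Fin 2) (1 : Fin 2) (1 : ℂ)) ⊗ₖ U₂)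
    (ρ' : Matrix (Fin 2) (Fin 2) ℂ)
    (hρ' : ρ' = fun j k => ∑ i : Fin 2,
      (Uhat₁ * (ρ ⊗ₖ Matrix.single (0 : Fin 2) (0 : Fin 2) (1 : ℂ)) * Uhat₁ᴴ)
        (i, j) (i, k)) :
    ρ' = !![((r * a + s * (1 - b) : ℝ) : ℂ),
            ((r * Real.sqrt (a * (1 - a)) + s * Real.sqrt ((1 - b) * b) : ℝ) : ℂ);
            ((r * Real.sqrt (a * (1 - a)) + s * Real.sqrt ((1 - b) * b) : ℝ) : ℂ),
            ((r * (1 - a) + s * b : ℝ) : ℂ)] ∧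
    ρ' 0 0 = ((a * r + (1 - b) * s : ℝ) : ℂ) ∧
    ρ' 1 1 = (((1 - a) * r + b * s : ℝ) : ℂ) :=
  transition_partial_trace_general a b ha0 ha1 hb0 hb1 r s c ρ hρ U₁ U₂ hU₁ hU₂ Uhat₁ hUhat₁ ρ' hρ'
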